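/- Suppose k/e is even. Then for every (a,b) ∈ GF(p^m)², the Hamming weight of the codeword c_{(a,b)} satisfies WT(c_{(a,b)}) = p^m − p^{m−1} − S(a,b)/(2p). -/

import Mathlib

/-- The fixed primitive `p`-th root of unity `ζ_p = exp(2πi/p)` raised to the power
`t ∈ GF(p)`, i.e. `ζ_p^t = exp(2πi·t/p)`. -/
noncomputable def zetaPow (p : ℕ) (t : ZMod p) : ℂ :=
  Complex.exp (2 * Real.pi * Complex.I * (t.val : ℂ) / p)

/-- The exponential sum
`S(a,b) = Σ_{y ∈ GF(p)^*} Σ_{x ∈ GF(p^m)} ( ζ_p^{Tr(y·a·x² + y·b·x^{p^k+1})}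
  + ζ_p^{Tr(-y·a·λ·x² + y·b·λ·x^{p^k+1})} )`,
where `Tr = Tr_{p^m/p}`. -/
noncomputable def Sab (p k : ℕ) [NeZero p] {F : Type*} [Field F] [Fintype F]
    [Algebra (ZMod p) F] (lam a b : F) : ℂ :=
  ∑ y ∈ Finset.univ \ {(0 : ZMod p)}, ∑ x : F,
    (zetaPow p (Algebra.trace (ZMod p) F
        (algebraMap (ZMod p) F y * a * x ^ 2 + algebraMap (ZMod p) F y * b * x ^ (p ^ k + 1))) +
     zetaPow p (Algebra.trace (ZMod p) F
        (-(algebraMap (ZMod p) F y * a * lam * x ^ 2)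
          + algebraMap (ZMod p) F y * b * lam * x ^ (p ^ k + 1))))

/-- The Hamming weight of the codeword
`c_{(a,b)} = ( Tr_{p^m/p}( a·(-π)^t + b·π^{t(p^k+1)/2} ) )_{t=0}^{p^m-2}`. -/
noncomputable def wtC (p m k : ℕ) [NeZero p] {F : Type*} [Field F] [Fintype F]
    [Algebra (ZMod p) F] (π a b : F) : ℕ :=
  Nat.card {t : Fin (p ^ m - 1) //
    Algebra.trace (ZMod p) F
      (a * (-π) ^ (t : ℕ) + b * π ^ ((t : ℕ) * ((p ^ k + 1) / 2))) ≠ 0}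

/-!
Write `η` for the quadratic character of `F = GF(p^m)`, `Tr` for the absolute trace and
`d = (p^k + 1)/2`. A primitive element `π` is a nonsquare, so `(-π)^t = η(π^t) π^t` and, as
`t` runs over `0, …, p^m - 2`, the coordinates of `c_{(a,b)}` are the values
`Tr(a η(u) u + b u^d)` at the nonzero `u`.

In `S(a,b)` we have `x^{p^k+1} = (x²)^d`. The map `x ↦ x²` covers every nonzero square twice,
and since `λ` is a nonsquare of `F` (it is one in `GF(q)`, and `[F : GF(q)] = s` is odd),
`x ↦ λx²` covers every nonsquare twice. As `2e ∣ k`, `p^k` is the square of an odd power of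
`q`, whence `λ^d = λ` and `λ x^{p^k+1} = (λx²)^d`. So for each `y` the inner sum of `S(a,b)`
equals `2 Σ_u ζ_p^{y Tr(a η(u) u + b u^d)}`, and orthogonality of the characters of `GF(p)` turns
`S(a,b)` into `2((p - 1) p^m - p · WT(c_{(a,b)}))`.
-/

open Finset

section QuadraticSums

variable {F M : Type*} [Field F] [Fintype F] [DecidableEq F] [AddCommGroup M]

theorem sum_comp_sq (hF : ringChar F ≠ 2) (f : F → M) :
    ∑ x, f (x ^ 2) = ∑ u, (quadraticChar F u + 1) • f u := by
  rw [← Finset.sum_fiberwise' univ (· ^ 2) f]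
  refine sum_congr rfl fun u _ => ?_
  rw [sum_const, ← quadraticChar_card_sqrts hF u, Set.toFinset_ofPred, natCast_zsmul]

theorem sum_comp_mul_sq_of_not_isSquare (hF : ringChar F ≠ 2) {lam : F} (hlam : ¬IsSquare lam)
    (g : F → M) : ∑ x, g (lam * x ^ 2) = ∑ u, (1 - quadraticChar F u) • g u := by
  have hlam0 : lam ≠ 0 := by rintro rfl; exact hlam IsSquare.zero
  rw [sum_comp_sq hF (fun u => g (lam * u))]
  refine Fintype.sum_equiv (Equiv.mulLeft₀ lam hlam0) _ _ fun u => ?_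
  rw [Equiv.mulLeft₀_apply, map_mul, quadraticChar_neg_one_iff_not_isSquare.mpr hlam]
  congr 1
  ring

theorem sum_sq_add_sum_mul_sq_of_not_isSquare (hF : ringChar F ≠ 2) {lam : F}
    (hlam : ¬IsSquare lam) (G : F → M) (a b : F) (d : ℕ) :
    ∑ x, G (a * x ^ 2 + b * (x ^ 2) ^ d) + ∑ x, G (-(a * (lam * x ^ 2)) + b * (lam * x ^ 2) ^ d)
      = 2 • ∑ u, G (a * quadraticChar F u * u + b * u ^ d) := by
  rw [sum_comp_sq hF (fun u => G (a * u + b * u ^ d)),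
    sum_comp_mul_sq_of_not_isSquare hF hlam (fun u => G (-(a * u) + b * u ^ d)),
    ← sum_add_distrib, smul_sum]
  refine sum_congr rfl fun u _ => ?_
  rcases eq_or_ne u 0 with rfl | hu
  · simp [two_smul]
  rcases quadraticChar_dichotomy hu with h | h <;> simp [h, two_smul]

end QuadraticSums

theorem not_isSquare_of_odd_degree {F : Type*} [Field F] [Fintype F] (hF : ringChar F ≠ 2)
    {q s : ℕ} (hq : Odd q) (hs : Odd s) (hcard : Fintype.card F = q ^ s) {lam : F}
    (hlam : lam ^ q = lam) (hlam' : ¬∃ x : F, x ^ q = x ∧ x ^ 2 = lam) : ¬IsSquare lam := by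
  rintro ⟨w, rfl⟩
  have hconj : w ^ q * w ^ q = w * w := by rw [← mul_pow, hlam]
  rcases mul_self_eq_mul_self_iff.mp hconj with hw | hw
  · exact hlam' ⟨w, hw, sq w⟩
  have hiter : ∀ i : ℕ, w ^ q ^ i = (-1) ^ i * w := by
    intro i
    induction i with
    | zero => simp
    | succ i ih =>
      rw [pow_succ, pow_mul, ih, mul_pow, hw, ← pow_mul, mul_comm i q, pow_mul, hq.neg_one_pow]
      ring
  have hw0 : w = 0 := by
    have h := FiniteField.pow_card w
    rw [hcard, hiter, hs.neg_one_pow, neg_one_mul, neg_eq_iff_add_eq_zero, ← two_mul] at h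
    exact (mul_eq_zero.mp h).resolve_left (Ring.two_ne_zero hF)
  exact hlam' ⟨w, by rw [hw, hw0, neg_zero], sq w⟩

section Generator

variable {F : Type*} [Field F] [Fintype F] {π : F}

theorem ne_zero_of_orderOf_eq_card_sub_one (hπ : orderOf π = Fintype.card F - 1) : π ≠ 0 := by
  rintro rfl
  have := Fintype.one_lt_card (α := F)
  rw [orderOf_eq_zero_iff'.mpr (fun n hn => by simp [hn.ne'])] at hπ
  omega

variable [DecidableEq F]

theorem card_pow_subtype_eq_card_filter (hπ : orderOf π = Fintype.card F - 1)
    (P : F → Prop) [DecidablePred P] (hP : ¬P 0) :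
    Nat.card {t : Fin (Fintype.card F - 1) // P (π ^ (t : ℕ))} = #{u | P u} := by
  have hπ0 := ne_zero_of_orderOf_eq_card_sub_one hπ
  let e : Fin (Fintype.card F - 1) → {u : F // u ≠ 0} :=
    fun t => ⟨π ^ (t : ℕ), pow_ne_zero _ hπ0⟩
  have he : Function.Bijective e := by
    rw [Fintype.bijective_iff_injective_and_card]
    refine ⟨fun t t' h => Fin.ext (pow_injOn_Iio_orderOf ?_ ?_ (congrArg Subtype.val h)), ?_⟩
    · simp [hπ]
    · simp [hπ]
    · simp [Fintype.card_subtype_compl]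
  rw [Nat.card_congr ((Equiv.ofBijective e he).subtypeEquiv
      (p := fun t : Fin _ => P (π ^ (t : ℕ))) (q := fun u : {u : F // u ≠ 0} => P u)
      fun _ => Iff.rfl),
    Nat.card_congr (Equiv.subtypeSubtypeEquivSubtype (p := (· ≠ 0)) (q := P)
      fun hu h0 => hP (h0 ▸ hu)),
    Nat.card_eq_fintype_card, Fintype.card_subtype]

theorem quadraticChar_eq_neg_one_of_orderOf (hF : ringChar F ≠ 2)
    (hπ : orderOf π = Fintype.card F - 1) : quadraticChar F π = -1 := by
  rw [quadraticChar_eq_pow_of_char_ne_two hF (ne_zero_of_orderOf_eq_card_sub_one hπ), if_neg]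
  have hodd := FiniteField.odd_card_of_char_ne_two hF
  have h1 := Fintype.one_lt_card (α := F)
  refine pow_ne_one_of_lt_orderOf ?_ ?_
  · omega
  · rw [hπ]; omega

theorem neg_pow_eq_quadraticChar_mul (hF : ringChar F ≠ 2)
    (hπ : orderOf π = Fintype.card F - 1) (t : ℕ) :
    (-π) ^ t = quadraticChar F (π ^ t) * π ^ t := by
  rw [map_pow, quadraticChar_eq_neg_one_of_orderOf hF hπ, neg_pow]
  push_cast
  rfl

end Generator

section Powers

variable {M : Type*} [Monoid M] {x : M} {q : ℕ}

theorem pow_pow_eq_self_of_pow_eq_self (h : x ^ q = x) (i : ℕ) : x ^ q ^ i = x := by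
  induction i with
  | zero => simp
  | succ i ih => rw [pow_succ, pow_mul, ih, h]

theorem pow_sq_add_one_div_two_of_pow_eq_self (hq : Odd q) (h : x ^ q = x) :
    x ^ ((q ^ 2 + 1) / 2) = x := by
  obtain ⟨c, rfl⟩ := hq
  have hexp : ((2 * c + 1) ^ 2 + 1) / 2 = (2 * c + 1) * c + (c + 1) := by
    rw [show (2 * c + 1) ^ 2 + 1 = 2 * ((2 * c + 1) * c + (c + 1)) by ring]
    omega
  rw [hexp, pow_add, pow_mul, h, ← pow_add, show c + (c + 1) = 2 * c + 1 by ring, h]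

end Powers

theorem zetaPow_eq_stdAddChar (p : ℕ) [NeZero p] (t : ZMod p) :
    zetaPow p t = ZMod.stdAddChar t := by
  rw [ZMod.stdAddChar_apply, ZMod.toCircle_apply, zetaPow]

theorem sum_nonzero_stdAddChar_mul (N : ℕ) [NeZero N] (c : ZMod N) :
    ∑ y ∈ univ \ {0}, ZMod.stdAddChar (y * c) = if c = 0 then (N : ℂ) - 1 else -1 := by
  rw [sum_sdiff_eq_sub (subset_univ _), AddChar.sum_mulShift c (ZMod.isPrimitive_stdAddChar N),
    sum_singleton, zero_mul, AddChar.map_zero_eq_one, ZMod.card]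
  split_ifs <;> ring

theorem wtC_eq_card_trace_ne_zero (p m k : ℕ) [NeZero p] {F : Type*} [Field F] [Fintype F]
    [DecidableEq F] [Algebra (ZMod p) F] (hF2 : ringChar F ≠ 2) (hF : Fintype.card F = p ^ m)
    {π : F} (hπ : orderOf π = p ^ m - 1) (a b : F) :
    wtC p m k π a b = #{u | Algebra.trace (ZMod p) F
      (a * quadraticChar F u * u + b * u ^ ((p ^ k + 1) / 2)) ≠ 0} := by
  rw [← hF] at hπ
  unfold wtC
  rw [← hF]
  simp_rw [neg_pow_eq_quadraticChar_mul hF2 hπ, pow_mul, ← mul_assoc]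
  refine card_pow_subtype_eq_card_filter hπ (fun u => Algebra.trace (ZMod p) F
    (a * quadraticChar F u * u + b * u ^ ((p ^ k + 1) / 2)) ≠ 0) ?_
  have hd : (p ^ k + 1) / 2 ≠ 0 := by have := Nat.one_le_pow k p (NeZero.pos p); omega
  simp [zero_pow hd]

theorem Sab_eq_card_trace_ne_zero (p k : ℕ) [NeZero p] (hp : Odd p) {F : Type*} [Field F]
    [Fintype F] [DecidableEq F] [Algebra (ZMod p) F] (hF2 : ringChar F ≠ 2) {lam : F}
    (hlam : ¬IsSquare lam) (hlamd : lam ^ ((p ^ k + 1) / 2) = lam) (a b : F) :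
    Sab p k lam a b = 2 * ((p - 1) * Fintype.card F - p * #{u | Algebra.trace (ZMod p) F
      (a * quadraticChar F u * u + b * u ^ ((p ^ k + 1) / 2)) ≠ 0}) := by
  unfold Sab
  set d := (p ^ k + 1) / 2
  set Tr := Algebra.trace (ZMod p) F
  have hd : p ^ k + 1 = 2 * d := (Nat.two_mul_div_two_of_even hp.pow.add_one).symm
  have hTr : ∀ (y : ZMod p) (v : F), Tr (algebraMap (ZMod p) F y * v) = y * Tr v := fun y v => by
    rw [← Algebra.smul_def, map_smul, smul_eq_mul]
  have hsq : ∀ (y : ZMod p) (x : F), Tr (algebraMap (ZMod p) F y * a * x ^ 2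
      + algebraMap (ZMod p) F y * b * x ^ (p ^ k + 1)) = y * Tr (a * x ^ 2 + b * (x ^ 2) ^ d) :=
    fun y x => by rw [← hTr, hd, pow_mul]; ring_nf
  have hnsq : ∀ (y : ZMod p) (x : F), Tr (-(algebraMap (ZMod p) F y * a * lam * x ^ 2)
      + algebraMap (ZMod p) F y * b * lam * x ^ (p ^ k + 1))
      = y * Tr (-(a * (lam * x ^ 2)) + b * (lam * x ^ 2) ^ d) :=
    fun y x => by rw [← hTr, hd, mul_pow, hlamd, pow_mul]; ring_nf
  calc _ = ∑ y ∈ univ \ {0}, 2 • ∑ u, ZMod.stdAddChar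
          (y * Tr (a * quadraticChar F u * u + b * u ^ d)) := by
        refine sum_congr rfl fun y _ => ?_
        simp only [hsq, hnsq, zetaPow_eq_stdAddChar, sum_add_distrib]
        exact sum_sq_add_sum_mul_sq_of_not_isSquare hF2 hlam
          (fun v => ZMod.stdAddChar (y * Tr v)) a b d
    _ = 2 * ∑ u,
          (if Tr (a * quadraticChar F u * u + b * u ^ d) ≠ 0 then -1 else (p : ℂ) - 1) := by
        simp_rw [← smul_sum, nsmul_eq_mul, Nat.cast_ofNat, ite_not]
        rw [sum_comm]
        simp_rw [sum_nonzero_stdAddChar_mul]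
    _ = _ := by
        rw [sum_ite, sum_const, sum_const, ← card_univ, ← card_filter_add_card_filter_not
          (s := univ) (fun u => Tr (a * quadraticChar F u * u + b * u ^ d) ≠ 0)]
        push_cast
        ring

theorem stmt_14_general (p m k e s : ℕ) [Fact p.Prime] (hodd : Odd p)
    (hm : 0 < m)
    (he : e = Nat.gcd m k) (hs : s = m / e) (hsodd : Odd s)
    (hke : Even (k / e))
    (F : Type*) [Field F] [Fintype F] [Algebra (ZMod p) F]
    (hF : Fintype.card F = p ^ m)
    (π : F) (hπ : orderOf π = p ^ m - 1)
    (lam : F) (hlamq : lam ^ (p ^ e) = lam)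
    (hlamns : ¬ ∃ x : F, x ^ (p ^ e) = x ∧ x ^ 2 = lam)
    (a b : F) :
    (wtC p m k π a b : ℂ)
      = (p : ℂ) ^ m - (p : ℂ) ^ (m - 1) - Sab p k lam a b / (2 * p) := by
  classical
  have hF2 : ringChar F ≠ 2 := by
    have := charP_of_injective_algebraMap (algebraMap (ZMod p) F).injective p
    rw [ringChar.eq F p]
    have := Nat.odd_iff.mp hodd
    omega
  have hem : e ∣ m := he ▸ Nat.gcd_dvd_left m k
  have hek : e ∣ k := he ▸ Nat.gcd_dvd_right m k
  have hcard : Fintype.card F = (p ^ e) ^ s := by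
    rw [hF, ← pow_mul, hs, Nat.mul_div_cancel' hem]
  have hlam : ¬IsSquare lam := not_isSquare_of_odd_degree hF2 hodd.pow hsodd hcard hlamq hlamns
  have hlamd : lam ^ ((p ^ k + 1) / 2) = lam := by
    obtain ⟨i, hi⟩ := hke
    have hpk : p ^ k = ((p ^ e) ^ i) ^ 2 := by
      rw [← pow_mul, ← pow_mul, ← Nat.mul_div_cancel' hek, hi]
      ring
    rw [hpk]
    exact pow_sq_add_one_div_two_of_pow_eq_self hodd.pow.pow
      (pow_pow_eq_self_of_pow_eq_self hlamq i)
  rw [wtC_eq_card_trace_ne_zero p m k hF2 hF hπ,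
    Sab_eq_card_trace_ne_zero p k hodd hF2 hlam hlamd]
  have hp0 : (p : ℂ) ≠ 0 := Nat.cast_ne_zero.mpr (NeZero.ne p)
  obtain ⟨m', rfl⟩ := Nat.exists_eq_add_of_lt hm
  rw [hF]
  field_simp
  push_cast
  ring

/-- Let `p` be an odd prime, `m, k` positive, `e = gcd(m,k)`, `s = m/e`
odd with `s ≥ 3`, `π` a primitive element of `F = GF(p^m)`, and `λ` a fixed nonsquare in
`GF(q) ⊆ F` (the subfield of solutions of `x^{p^e} = x`).  Suppose `k/e` is even.  Then
for every `(a,b) ∈ GF(p^m)²`,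
`WT(c_{(a,b)}) = p^m - p^{m-1} - S(a,b)/(2p)`. -/
theorem stmt_14 (p m k e s : ℕ) [Fact p.Prime] (hodd : Odd p)
    (hm : 0 < m) (hk : 0 < k)
    (he : e = Nat.gcd m k) (hs : s = m / e) (hsodd : Odd s) (hs3 : 3 ≤ s)
    (hke : Even (k / e))
    (F : Type*) [Field F] [Fintype F] [Algebra (ZMod p) F]
    (hF : Fintype.card F = p ^ m)
    (π : F) (hπ : orderOf π = p ^ m - 1)
    (lam : F) (hlam0 : lam ≠ 0) (hlamq : lam ^ (p ^ e) = lam)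
    (hlamns : ¬ ∃ x : F, x ^ (p ^ e) = x ∧ x ^ 2 = lam)
    (a b : F) :
    (wtC p m k π a b : ℂ)
      = (p : ℂ) ^ m - (p : ℂ) ^ (m - 1) - Sab p k lam a b / (2 * p) :=
  stmt_14_general p m k e s hodd hm he hs hsodd hke F hF π hπ lam hlamq hlamns a b
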